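/- Let D be a 4×4 complex matrix (entries D_{ij}, 0-based indexing, row i and column j). The linear map x ↦ D·x on ℂ⁴ is a derivation of the 4-dimensional Mock-Lie algebra A_{1,3} ⊕ A_{0,1} if and only if D_{01} = 0, D_{03} = 0, D_{21} = 0, D_{23} = 0, D_{31} = 0, D_{00} = D_{22}, D_{02} = −D_{20}, and D_{11} = 2·D_{22}. Equivalently, the derivations are exactly the linear maps whose matrix relative to the basis (e_1, e_2, e_3, e_4) has the form [[d_{33}, 0, −d_{31}, 0], [d_{21}, 2d_{33}, d_{23}, d_{24}], [d_{31}, 0, d_{33}, 0], [d_{41}, 0, d_{43}, d_{44}]]. -/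

import Mathlib

/-!
The product is `x · y = B(x, y) e_2` with `B(x, y) = x 0 * y 0 + x 2 * y 2`. Hence
`D (x · y) = B(x, y) D e_2` while `D x · y + x · D y` is a multiple of `e_2`: `D` is a derivation iff
`D e_2 ∈ ℂ e_2` and `D 1 1 * B(x, y) = B(D x, y) + B(x, D y)`. The latter is an identity of bilinear
forms, so it is equivalent to the equations obtained from basis pairs.
-/

/-- The product of the 4-dimensional Mock-Lie algebra `A_{1,3} ⊕ A_{0,1}`:
`e_1 · e_1 = e_2`, `e_3 · e_3 = e_2`, all other products of basis vectors zero. -/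
def mulA13A01 (x y : Fin 4 → ℂ) : Fin 4 → ℂ := ![0, x 0 * y 0 + x 2 * y 2, 0, 0]

open Matrix

def formA13A01 (x y : Fin 4 → ℂ) : ℂ := x 0 * y 0 + x 2 * y 2

lemma mulA13A01_eq_single (x y : Fin 4 → ℂ) :
    mulA13A01 x y = Pi.single 1 (formA13A01 x y) := by
  ext i; fin_cases i <;> rfl

lemma formA13A01_single_zero : formA13A01 (Pi.single 0 1) (Pi.single 0 1) = 1 := by
  simp [formA13A01]

section

variable (D : Matrix (Fin 4) (Fin 4) ℂ)

lemma derivation_iff_col_one_and_form :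
    (∀ x y : Fin 4 → ℂ,
        D.mulVec (mulA13A01 x y) = mulA13A01 (D.mulVec x) y + mulA13A01 x (D.mulVec y)) ↔
      (D 0 1 = 0 ∧ D 2 1 = 0 ∧ D 3 1 = 0) ∧ ∀ x y : Fin 4 → ℂ,
        D 1 1 * formA13A01 x y = formA13A01 (D *ᵥ x) y + formA13A01 x (D *ᵥ y) := by
  simp only [mulA13A01_eq_single, mulVec_single, op_smul_eq_mul, ← Pi.single_add, funext_iff,
    Pi.smul_apply, col_apply, Fin.forall_fin_succ, ne_eq, zero_ne_one,
    not_false_eq_true, Pi.single_eq_of_ne, mul_eq_zero, Fin.succ_zero_eq_one, Pi.single_eq_same,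
    Fin.succ_one_eq_two, Fin.reduceEq, Fin.reduceSucc, IsEmpty.forall_iff, and_true]
  constructor
  · intro h
    obtain ⟨h0, -, h2, h3⟩ := h (Pi.single 0 1) (Pi.single 0 1)
    simp only [formA13A01_single_zero, one_ne_zero, or_false] at h0 h2 h3
    exact ⟨⟨h0, h2, h3⟩, fun x y => (h x y).2.1⟩
  · rintro ⟨⟨h0, h2, h3⟩, h⟩ x y
    exact ⟨.inl h0, h x y, .inl h2, .inl h3⟩

lemma formA13A01_derivation_iff :
    (∀ x y : Fin 4 → ℂ,
        D 1 1 * formA13A01 x y = formA13A01 (D *ᵥ x) y + formA13A01 x (D *ᵥ y)) ↔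
      D 0 1 = 0 ∧ D 0 3 = 0 ∧ D 2 1 = 0 ∧ D 2 3 = 0 ∧
        D 0 0 = D 2 2 ∧ D 0 2 = -D 2 0 ∧ D 1 1 = 2 * D 2 2 := by
  constructor
  · intro h
    have basis (j k : Fin 4) := h (Pi.single j 1) (Pi.single k 1)
    have h00 := basis 0 0
    have h22 := basis 2 2
    have h02 := basis 0 2
    have h01 := basis 0 1
    have h03 := basis 0 3
    have h21 := basis 2 1
    have h23 := basis 2 3
    simp only [Fin.isValue, formA13A01, Pi.single_eq_same, mul_one, ne_eq, Fin.reduceEq,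
      not_false_eq_true, Pi.single_eq_of_ne, mul_zero, add_zero, mulVec_single, MulOpposite.op_one,
      Pi.smul_apply, col_apply, one_smul, one_mul, zero_mul, zero_add, zero_ne_one]
      at h00 h22 h02 h01 h03 h21 h23
    refine ⟨h01.symm, h03.symm, h21.symm, h23.symm, ?_, ?_, ?_⟩
    · linear_combination (h22 - h00) / 2
    · linear_combination -h02
    · linear_combination h22
  · rintro ⟨h01, h03, h21, h23, h00, h02, h11⟩ x y
    simp only [formA13A01, mulVec, dotProduct, Fin.sum_univ_four, h01, h03, h21, h23, h00, h02, h11]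
    ring

end

/-- `x ↦ D · x` is a derivation of `A_{1,3} ⊕ A_{0,1}` iff
`D 0 1 = 0`, `D 0 3 = 0`, `D 2 1 = 0`, `D 2 3 = 0`, `D 3 1 = 0`,
`D 0 0 = D 2 2`, `D 0 2 = -D 2 0` and `D 1 1 = 2 * D 2 2`. -/
theorem derivation_A13_A01_iff (D : Matrix (Fin 4) (Fin 4) ℂ) :
    (∀ x y : Fin 4 → ℂ,
        D.mulVec (mulA13A01 x y) = mulA13A01 (D.mulVec x) y + mulA13A01 x (D.mulVec y)) ↔
      (D 0 1 = 0 ∧ D 0 3 = 0 ∧ D 2 1 = 0 ∧ D 2 3 = 0 ∧ D 3 1 = 0 ∧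
        D 0 0 = D 2 2 ∧ D 0 2 = -D 2 0 ∧ D 1 1 = 2 * D 2 2) := by
  rw [derivation_iff_col_one_and_form, formA13A01_derivation_iff]
  tauto
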